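/- If a join-semilattice P has no infinite antichain, then P embeds as a join-subsemilattice into I_{<ω}(J(P)), the join-semilattice of finitely generated initial segments of the poset of ideals of P. -/

import Mathlib

/-- Finitely generated initial segments of `Q`, ordered by inclusion. -/
def FinGenInitSeg (Q : Type*) [Preorder Q] : Type _ :=
  {S : Set Q // ∃ F : Finset Q, S = {x | ∃ y ∈ F, x ≤ y}}

instance {Q : Type*} [Preorder Q] : PartialOrder (FinGenInitSeg Q) :=
  inferInstanceAs (PartialOrder {S : Set Q // ∃ F : Finset Q, S = {x | ∃ y ∈ F, x ≤ y}})
instance {Q : Type*} [Preorder Q] : SemilatticeSup (FinGenInitSeg Q) :=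
  { (inferInstance : PartialOrder (FinGenInitSeg Q)) with
    sup := fun S T => ⟨S.1 ∪ T.1, by
      classical
      obtain ⟨F, hF⟩ := S.2
      obtain ⟨G, hG⟩ := T.2
      refine ⟨F ∪ G, ?_⟩
      ext x
      simp only [hF, hG, Set.mem_union, Set.mem_setOf_eq, Finset.mem_union]
      constructor
      · rintro (⟨y, hy, hxy⟩ | ⟨y, hy, hxy⟩)
        · exact ⟨y, Or.inl hy, hxy⟩
        · exact ⟨y, Or.inr hy, hxy⟩
      · rintro ⟨y, hy | hy, hxy⟩
        · exact Or.inl ⟨y, hy, hxy⟩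
        · exact Or.inr ⟨y, hy, hxy⟩⟩
    le_sup_left := fun S T => Set.subset_union_left (s := S.1) (t := T.1)
    le_sup_right := fun S T => Set.subset_union_right (s := S.1) (t := T.1)
    sup_le := fun _ _ _ h1 h2 => Set.union_subset h1 h2 }
/-- An ideal of a poset: a nonempty up-directed initial segment. -/
def IsIdeal {α : Type*} [Preorder α] (I : Set α) : Prop :=
  I.Nonempty ∧ (∀ ⦃x y : α⦄, x ≤ y → y ∈ I → x ∈ I) ∧
    ∀ x ∈ I, ∀ y ∈ I, ∃ z ∈ I, x ≤ z ∧ y ≤ z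
/-- `A` embeds into `B` as a join-subsemilattice: an injective map preserving binary joins. -/
def JoinEmbeds (A B : Type*) [SemilatticeSup A] [SemilatticeSup B] : Prop :=
  ∃ f : A → B, Function.Injective f ∧ ∀ x y : A, f (x ⊔ y) = f x ⊔ f y

/-!
Let `S` be an initial segment of `P` that is not a finite union of ideals. Some two elements of
`S` have their join outside `S`; extend them, by Zorn, to a maximal set `M ⊆ S` of pairwise
incompatible elements (joins outside `S`). Such an `M` is an antichain, hence finite, and every
element of `S` is compatible with some `a ∈ M`, so `S` lies below the union of the cones
`S ∩ Ici a`, `a ∈ M`. One of these cones is then again not covered by finitely many ideals, and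
every other element of `M` is incomparable with all of it. Repeating the argument inside the bad
cone (compatibility now meaning that the join stays in the cone) produces an infinite antichain.

Given this, `x ↦ {J | x ∉ J}` is the embedding: the ideals avoiding `x` are those contained in the
initial segment `{y | ¬ x ≤ y}`, i.e. in one of the finitely many ideals making it up.
-/

open Set

section

variable {P : Type*}

section Preorder

variable [Preorder P]

theorem IsIdeal.isLowerSet {I : Set P} (hI : IsIdeal I) : IsLowerSet I :=
  fun _ _ hba ha => hI.2.1 hba ha

theorem isIdeal_Iic (x : P) : IsIdeal (Iic x) :=
  ⟨nonempty_Iic, fun _ _ hxy hy => hxy.trans hy, fun _ hu _ hv => ⟨x, le_rfl, hu, hv⟩⟩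

theorem IsIdeal.exists_subset_of_subset_sUnion {J : Set P} (hJ : IsIdeal J) {T : Set (Set P)}
    (hT : T.Finite) (hTlower : ∀ I ∈ T, IsLowerSet I) (hJT : J ⊆ ⋃₀ T) : ∃ I ∈ T, J ⊆ I := by
  induction T, hT using Set.Finite.induction_on with
  | empty =>
    obtain ⟨x, hx⟩ := hJ.1
    simpa using hJT hx
  | @insert I₀ T _ _ ih =>
    by_cases hJI₀ : J ⊆ I₀
    · exact ⟨I₀, mem_insert _ _, hJI₀⟩
    obtain ⟨e, heJ, heI₀⟩ := not_subset.1 hJI₀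
    -- every `x ∈ J` lies below some `z ∈ J` above `e`, and such a `z` escapes `I₀`
    have hJT' : J ⊆ ⋃₀ T := by
      intro x hx
      obtain ⟨z, hzJ, hxz, hez⟩ := hJ.2.2 x hx e heJ
      obtain ⟨I, hI, hzI⟩ := hJT hzJ
      have hIT : I ∈ T := (mem_insert_iff.1 hI).resolve_left <| by
        rintro rfl
        exact heI₀ (hTlower I (mem_insert _ _) hez hzI)
      exact ⟨I, hIT, hTlower I (mem_insert_of_mem _ hIT) hxz hzI⟩
    obtain ⟨I, hI, hJI⟩ := ih (fun I hI => hTlower I (mem_insert_of_mem _ hI)) hJT'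
    exact ⟨I, mem_insert_of_mem _ hI, hJI⟩

theorem exists_infinite_antichain_of_forall_exists_incompRel {C : Set P → Prop}
    (hstep : ∀ U, C U → ∃ V ⊆ U, C V ∧ ∃ c ∈ U, ∀ x ∈ V, IncompRel (· ≤ ·) c x)
    {U₀ : Set P} (hU₀ : C U₀) : ∃ A : Set P, A.Infinite ∧ IsAntichain (· ≤ ·) A := by
  obtain ⟨-, -, -, c₀, -, -⟩ := hstep U₀ hU₀
  have : Nonempty P := ⟨c₀⟩
  choose! next hnext_sub hnext_C c hc_mem hc_incomp using hstep
  set U : ℕ → Set P := fun n => next^[n] U₀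
  have hU_succ : ∀ n, U (n + 1) = next (U n) := fun n => Function.iterate_succ_apply' _ _ _
  have hC : ∀ n, C (U n) := by
    intro n
    induction n with
    | zero => exact hU₀
    | succ n ih => exact hU_succ n ▸ hnext_C _ ih
  have hU_anti : Antitone U :=
    antitone_nat_of_succ_le fun n => hU_succ n ▸ hnext_sub _ (hC n)
  have hincomp : ∀ ⦃m n⦄, m < n → IncompRel (· ≤ ·) (c (U m)) (c (U n)) := fun m n hmn =>
    hc_incomp _ (hC m) _ (hU_succ m ▸ hU_anti (Nat.succ_le_of_lt hmn) (hc_mem _ (hC n)))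
  refine ⟨range fun n => c (U n), infinite_range_of_injective fun m n hmn => ?_, ?_⟩
  · by_contra hne
    rcases lt_or_gt_of_ne hne with hlt | hlt
    · exact (hincomp hlt).1 hmn.le
    · exact (hincomp hlt).1 hmn.ge
  · rintro _ ⟨m, rfl⟩ _ ⟨n, rfl⟩ hne hle
    rcases lt_or_gt_of_ne (fun hmn : m = n => hne (hmn ▸ rfl)) with hlt | hlt
    · exact (hincomp hlt).1 hle
    · exact (hincomp hlt).2 hle

def IdealCovered (S U : Set P) : Prop :=
  ∃ T : Set (Set P), T.Finite ∧ (∀ I ∈ T, IsIdeal I ∧ I ⊆ S) ∧ U ⊆ ⋃₀ T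

theorem IdealCovered.of_subset_lowerClosure {S U V : Set P} (hV : IdealCovered S V)
    (hUV : U ⊆ lowerClosure V) : IdealCovered S U := by
  obtain ⟨T, hT, hTS, hVT⟩ := hV
  refine ⟨T, hT, hTS, fun x hx => ?_⟩
  obtain ⟨v, hv, hxv⟩ := mem_lowerClosure.1 (hUV hx)
  obtain ⟨I, hI, hvI⟩ := hVT hv
  exact ⟨I, hI, (hTS I hI).1.isLowerSet hxv hvI⟩

theorem IdealCovered.biUnion {α : Type*} {S : Set P} {M : Set α} (hM : M.Finite)
    {f : α → Set P} (hf : ∀ a ∈ M, IdealCovered S (f a)) : IdealCovered S (⋃ a ∈ M, f a) := by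
  choose! T hT hTS hfT using hf
  refine ⟨⋃ a ∈ M, T a, hM.biUnion hT, fun I hI => ?_, fun x hx => ?_⟩
  · obtain ⟨a, ha, hIa⟩ := mem_iUnion₂.1 hI
    exact hTS a ha I hIa
  · obtain ⟨a, ha, hxa⟩ := mem_iUnion₂.1 hx
    obtain ⟨I, hI, hxI⟩ := hfT a ha hxa
    exact ⟨I, mem_biUnion ha hI, hxI⟩

def idealsAvoiding (x : P) : Set {I : Set P // IsIdeal I} :=
  {J | x ∉ J.1}

end Preorder

theorem idealsAvoiding_injective [PartialOrder P] :
    Function.Injective (idealsAvoiding (P := P)) := by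
  intro x y hxy
  have hiff : ∀ z, ¬ x ≤ z ↔ ¬ y ≤ z := fun z =>
    Set.ext_iff.1 hxy ⟨Iic z, isIdeal_Iic z⟩
  exact le_antisymm (not_not.1 fun hxy' => (hiff y).1 hxy' le_rfl)
    (not_not.1 fun hyx => (hiff x).2 hyx le_rfl)

section SemilatticeSup

variable [SemilatticeSup P]

theorem IsIdeal.sup_mem_iff {I : Set P} (hI : IsIdeal I) {x y : P} :
    x ⊔ y ∈ I ↔ x ∈ I ∧ y ∈ I := by
  refine ⟨fun h => ⟨hI.2.1 le_sup_left h, hI.2.1 le_sup_right h⟩, fun ⟨hx, hy⟩ => ?_⟩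
  obtain ⟨z, hz, hxz, hyz⟩ := hI.2.2 x hx y hy
  exact hI.2.1 (sup_le hxz hyz) hz

theorem idealsAvoiding_sup (x y : P) :
    idealsAvoiding (x ⊔ y) = idealsAvoiding x ∪ idealsAvoiding y := by
  ext J
  simp only [idealsAvoiding, mem_ofPred_eq, mem_union, J.2.sup_mem_iff, not_and_or]

theorem idealCovered_of_forall_sup_mem {S U : Set P} (hS : IsLowerSet S) (hUS : U ⊆ S)
    (hU : ∀ x ∈ U, ∀ y ∈ U, x ⊔ y ∈ U) : IdealCovered S U := by
  rcases U.eq_empty_or_nonempty with rfl | hne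
  · exact ⟨∅, finite_empty, by simp, by simp⟩
  refine ⟨{↑(lowerClosure U)}, finite_singleton _, ?_, fun x hx => ⟨_, rfl, subset_lowerClosure hx⟩⟩
  rintro _ rfl
  refine ⟨⟨hne.mono subset_lowerClosure, fun _ _ hxy hy => (lowerClosure U).lower hxy hy, ?_⟩, ?_⟩
  · intro x hx y hy
    obtain ⟨u, hu, hxu⟩ := mem_lowerClosure.1 hx
    obtain ⟨v, hv, hyv⟩ := mem_lowerClosure.1 hy
    exact ⟨u ⊔ v, subset_lowerClosure (hU u hu v hv), le_sup_of_le_left hxu,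
      le_sup_of_le_right hyv⟩
  · intro x hx
    obtain ⟨u, hu, hxu⟩ := mem_lowerClosure.1 hx
    exact hS hxu (hUS hu)

theorem isAntichain_of_pairwise_sup_notMem {U M : Set P} (hMU : M ⊆ U)
    (hM : M.Pairwise fun a b => a ⊔ b ∉ U) : IsAntichain (· ≤ ·) M :=
  fun a ha b hb hab hle => hM ha hb hab (by rw [sup_eq_right.2 hle]; exact hMU hb)

theorem exists_pairwise_sup_notMem_superset {U A : Set P} (hAU : A ⊆ U)
    (hA : A.Pairwise fun a b => a ⊔ b ∉ U) :
    ∃ M, A ⊆ M ∧ M ⊆ U ∧ (M.Pairwise fun a b => a ⊔ b ∉ U) ∧ ∀ x ∈ U, ∃ a ∈ M, x ⊔ a ∈ U := by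
  obtain ⟨M, hAM, hM⟩ := zorn_subset_nonempty {M | M ⊆ U ∧ M.Pairwise fun a b => a ⊔ b ∉ U}
    (fun c hc hchain _ => ⟨⋃₀ c, ⟨sUnion_subset fun M hM => (hc hM).1,
      (pairwise_sUnion hchain.directedOn).2 fun M hM => (hc hM).2⟩,
      fun _ => subset_sUnion_of_mem⟩) A ⟨hAU, hA⟩
  refine ⟨M, hAM, hM.prop.1, hM.prop.2, fun x hx => ?_⟩
  by_contra! hxM
  have hxnM : x ∉ M := fun h => hxM x h (by rwa [sup_idem])
  have hins : insert x M ⊆ U ∧ (insert x M).Pairwise fun a b => a ⊔ b ∉ U :=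
    ⟨insert_subset hx hM.prop.1, hM.prop.2.insert_of_notMem hxnM fun b hb =>
      ⟨hxM b hb, by rw [sup_comm]; exact hxM b hb⟩⟩
  exact hxnM (hM.eq_of_subset hins (subset_insert _ _) ▸ mem_insert _ _)

theorem incompRel_of_sup_notMem {S V : Set P} (hS : IsLowerSet S) (hV : IsUpperSet V)
    {a c x : P} (hc : c ∈ S ∩ V) (hca : c ⊔ a ∉ S ∩ V) (hx : x ∈ S ∩ Ici a) :
    IncompRel (· ≤ ·) c x :=
  ⟨fun hcx => hca ⟨hS (sup_le hcx hx.2) hx.1, hV le_sup_left hc.2⟩,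
    fun hxc => hca (by rwa [sup_eq_left.2 (hx.2.trans hxc)])⟩

theorem exists_not_idealCovered_inter_Ici
    (h : ¬ ∃ A : Set P, A.Infinite ∧ IsAntichain (· ≤ ·) A) {S V : Set P} (hS : IsLowerSet S)
    (hV : IsUpperSet V) (hbad : ¬ IdealCovered S (S ∩ V)) :
    ∃ a ∈ S ∩ V, ¬ IdealCovered S (S ∩ Ici a) ∧
      ∃ c ∈ S ∩ V, ∀ x ∈ S ∩ Ici a, IncompRel (· ≤ ·) c x := by
  set U := S ∩ V
  obtain ⟨x₀, hx₀, y₀, hy₀, hxy₀⟩ : ∃ x ∈ U, ∃ y ∈ U, x ⊔ y ∉ U := by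
    by_contra! hU
    exact hbad (idealCovered_of_forall_sup_mem hS inter_subset_left hU)
  have hx₀y₀ : x₀ ≠ y₀ := by
    rintro rfl
    exact hxy₀ (by rwa [sup_idem])
  obtain ⟨M, hxyM, hMU, hMpair, hMcover⟩ := exists_pairwise_sup_notMem_superset
    (pair_subset hx₀ hy₀) (pairwise_pair.2 fun _ => ⟨hxy₀, by rwa [sup_comm]⟩)
  have hMfin : M.Finite :=
    not_infinite.1 fun hinf => h ⟨M, hinf, isAntichain_of_pairwise_sup_notMem hMU hMpair⟩
  obtain ⟨a, haM, ha⟩ : ∃ a ∈ M, ¬ IdealCovered S (S ∩ Ici a) := by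
    by_contra! hgood
    refine hbad ((IdealCovered.biUnion hMfin hgood).of_subset_lowerClosure fun x hx => ?_)
    obtain ⟨a, haM, hxa⟩ := hMcover x hx
    exact mem_lowerClosure.2 ⟨x ⊔ a, mem_biUnion haM ⟨hxa.1, le_sup_right⟩, le_sup_left⟩
  obtain ⟨c, hcM, hca⟩ : ∃ c ∈ M, c ≠ a := by
    by_cases hax : a = x₀
    · exact ⟨y₀, hxyM (by simp), hax ▸ hx₀y₀.symm⟩
    · exact ⟨x₀, hxyM (by simp), Ne.symm hax⟩
  exact ⟨a, hMU haM, ha, c, hMU hcM,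
    fun x hx => incompRel_of_sup_notMem hS hV (hMU hcM) (hMpair hcM haM hca) hx⟩

theorem IsLowerSet.exists_finite_ideals_sUnion_eq
    (h : ¬ ∃ A : Set P, A.Infinite ∧ IsAntichain (· ≤ ·) A) {S : Set P} (hS : IsLowerSet S) :
    ∃ T : Set (Set P), T.Finite ∧ (∀ I ∈ T, IsIdeal I) ∧ ⋃₀ T = S := by
  obtain ⟨T, hT, hTS, hST⟩ : IdealCovered S S := by
    by_contra hbad
    refine h (exists_infinite_antichain_of_forall_exists_incompRel
      (C := fun U => ∃ V, IsUpperSet V ∧ U = S ∩ V ∧ ¬ IdealCovered S U) ?_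
      ⟨univ, isUpperSet_univ, (inter_univ S).symm, hbad⟩)
    rintro _ ⟨V, hV, rfl, hbad⟩
    obtain ⟨a, ha, ha_bad, c, hc, hc_incomp⟩ := exists_not_idealCovered_inter_Ici h hS hV hbad
    exact ⟨S ∩ Ici a, inter_subset_inter_right _ (hV.Ici_subset ha.2),
      ⟨Ici a, isUpperSet_Ici a, rfl, ha_bad⟩, c, hc, hc_incomp⟩
  exact ⟨T, hT, fun I hI => (hTS I hI).1, (sUnion_subset fun I hI => (hTS I hI).2).antisymm hST⟩

theorem exists_finset_idealsAvoiding_eq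
    (h : ¬ ∃ A : Set P, A.Infinite ∧ IsAntichain (· ≤ ·) A) (x : P) :
    ∃ F : Finset {I : Set P // IsIdeal I}, idealsAvoiding x = {J | ∃ K ∈ F, J ≤ K} := by
  obtain ⟨T, hT, hTideal, hTS⟩ := IsLowerSet.exists_finite_ideals_sUnion_eq h
    (S := {y | ¬ x ≤ y}) fun _ _ hba ha hxb => ha (hxb.trans hba)
  refine ⟨(hT.preimage Subtype.val_injective.injOn).toFinset, ?_⟩
  ext J
  simp only [idealsAvoiding, mem_ofPred_eq, Finite.mem_toFinset, mem_preimage]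
  constructor
  · intro hxJ
    have hJT : J.1 ⊆ ⋃₀ T := hTS ▸ fun z hz hxz => hxJ (J.2.isLowerSet hxz hz)
    obtain ⟨I, hI, hJI⟩ :=
      J.2.exists_subset_of_subset_sUnion hT (fun I hI => (hTideal I hI).isLowerSet) hJT
    exact ⟨⟨I, hTideal I hI⟩, hI, hJI⟩
  · rintro ⟨K, hK, hJK⟩ hxJ
    have hxT : x ∈ ⋃₀ T := ⟨K.1, hK, hJK hxJ⟩
    exact (hTS ▸ hxT : x ∈ {y | ¬ x ≤ y}) le_rfl

end SemilatticeSup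

end

/-- if a join-semilattice `P` has no infinite antichain, it embeds as a
join-subsemilattice into `I_{<ω}(J(P))`. -/
theorem stmt_11 {P : Type*} [SemilatticeSup P]
    (h : ¬ ∃ A : Set P, A.Infinite ∧ IsAntichain (· ≤ ·) A) :
    JoinEmbeds P (FinGenInitSeg {I : Set P // IsIdeal I}) :=
  ⟨fun x => ⟨idealsAvoiding x, exists_finset_idealsAvoiding_eq h x⟩,
    fun _ _ hxy => idealsAvoiding_injective (congrArg Subtype.val hxy),
    fun x y => Subtype.ext (idealsAvoiding_sup x y)⟩
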